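/- arXiv:2211.12679 — 2 statements merged into one kernel-verified Lean document; each statement's English description precedes it below -/
import Mathlib

section
/- Let (M̃, g̃) be a length space with a flow whose orbits are globally length-minimizing, and let h̃ : (Ñ, d₁) → (M̃, d₂) be an (η₃,η₄)-quasi-isometry that is an orbit equivalence between a flow on Ñ and the flow on M̃. Suppose there exist η₁, η₂ > 0 such that whenever x, y lie on a common flow line γ in Ñ with length_{g̃}(γ_{[x,y]}) ≥ η₁, then length(h̃(γ_{[x,y]})) ≥ η₂. Then every flow line of the flow on Ñ is an (A₀, A₁)-quasigeodesic with A₀ = η₁η₃/η₂ and A₁ = η₁η₄/η₂ + η₁. -/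
/-- Let `h̃ : Ñ → M̃` be an orbit equivalence which is an (η₃,η₄)-quasi-isometry, where the
orbits of the flow on `M̃` are globally length minimizing.  Let `γ` be a flow line of the
flow on `Ñ` with length function `L` (so `L s t` is the length of `γ|[s,t]`), and let `L₂`
be the length function of the image orbit `h̃ ∘ γ` in `M̃`.  If whenever `L s t ≥ η₁` one
has `L₂ s t ≥ η₂`, then `γ` is an `(A₀, A₁)`-quasigeodesic with `A₀ = η₁η₃/η₂` and
`A₁ = η₁η₄/η₂ + η₁`. -/
theorem stmt4 {N M : Type*} [MetricSpace N] [MetricSpace M]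
    (γ : ℝ → N) (h : N → M) (L L₂ : ℝ → ℝ → ℝ)
    (η₁ η₂ η₃ η₄ : ℝ) (h1 : 0 < η₁) (h2 : 0 < η₂) (h3 : 1 < η₃) (h4 : 0 < η₄)
    (hLnonneg : ∀ s t, s ≤ t → 0 ≤ L s t)
    (hLzero : ∀ s, L s s = 0)
    (hLadd : ∀ s t u, s ≤ t → t ≤ u → L s u = L s t + L t u)
    (hLcont : ∀ s, Continuous (L s))
    (hL2nonneg : ∀ s t, s ≤ t → 0 ≤ L₂ s t)
    (hL2add : ∀ s t u, s ≤ t → t ≤ u → L₂ s u = L₂ s t + L₂ t u)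
    -- orbits of the flow on M̃ are globally length minimizing:
    (hmin : ∀ s t, s ≤ t → dist (h (γ s)) (h (γ t)) = L₂ s t)
    -- h̃ is an (η₃,η₄)-quasi-isometry:
    (hqi : ∀ a b : N, dist (h a) (h b) ≤ η₃ * dist a b + η₄)
    -- segments of γ of length ≥ η₁ have image of length ≥ η₂:
    (hcompare : ∀ s t, s ≤ t → η₁ ≤ L s t → η₂ ≤ L₂ s t) :
    ∀ s t, s ≤ t →
      L s t ≤ (η₁ * η₃ / η₂) * dist (γ s) (γ t) + (η₁ * η₄ / η₂ + η₁) := by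
  -- key claim: L s t ≤ (η₁/η₂) * L₂ s t + η₁
  have key : ∀ n : ℕ, ∀ s t : ℝ, s ≤ t → L s t ≤ n * η₁ →
      L s t ≤ (η₁ / η₂) * L₂ s t + η₁ := by
    intro n
    induction n with
    | zero =>
      intro s t hst hb
      simp only [Nat.cast_zero, zero_mul] at hb
      have h0 : L s t = 0 := le_antisymm hb (hLnonneg s t hst)
      have := mul_nonneg (div_pos h1 h2).le (hL2nonneg s t hst)
      linarith
    | succ n ih =>
      intro s t hst hb
      by_cases hle : L s t ≤ η₁
      · have := mul_nonneg (div_pos h1 h2).le (hL2nonneg s t hst)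
        linarith
      push_neg at hle
      -- find u ∈ [s,t] with L s u = η₁
      have hiv : η₁ ∈ L s '' Set.Icc s t := by
        apply intermediate_value_Icc hst (hLcont s).continuousOn
        constructor
        · rw [hLzero s]; exact h1.le
        · exact hle.le
      obtain ⟨u, hu, huL⟩ := hiv
      have hsu : s ≤ u := hu.1
      have hut : u ≤ t := hu.2
      have hsplit := hLadd s u t hsu hut
      have hLut : L u t = L s t - η₁ := by rw [hsplit, huL]; ring
      have hb' : L u t ≤ n * η₁ := by
        rw [hLut]; push_cast at hb ⊢; linarith
      have hih := ih u t hut hb'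
      have hcmp : η₂ ≤ L₂ s u := hcompare s u hsu (le_of_eq huL.symm)
      have hsplit2 := hL2add s u t hsu hut
      have hd : η₁ / η₂ * η₂ = η₁ := div_mul_cancel₀ η₁ (ne_of_gt h2)
      have hpos : 0 < η₁ / η₂ := div_pos h1 h2
      have : (η₁ / η₂) * L₂ s t ≥ η₁ + (η₁ / η₂) * L₂ u t := by
        rw [hsplit2]
        nlinarith
      nlinarith [hLut]
  intro s t hst
  have hn : ∃ n : ℕ, L s t ≤ n * η₁ := by
    obtain ⟨n, hn⟩ := exists_nat_ge (L s t / η₁)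
    exact ⟨n, by rwa [div_le_iff₀ h1] at hn⟩
  obtain ⟨n, hn⟩ := hn
  have hkey := key n s t hst hn
  have hL2 : L₂ s t ≤ η₃ * dist (γ s) (γ t) + η₄ := by
    rw [← hmin s t hst]; exact hqi (γ s) (γ t)
  have hpos : 0 < η₁ / η₂ := div_pos h1 h2
  have : (η₁ / η₂) * L₂ s t ≤ (η₁ / η₂) * (η₃ * dist (γ s) (γ t) + η₄) :=
    mul_le_mul_of_nonneg_left hL2 hpos.le
  calc L s t ≤ (η₁ / η₂) * L₂ s t + η₁ := hkey
    _ ≤ (η₁ / η₂) * (η₃ * dist (γ s) (γ t) + η₄) + η₁ := by linarith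
    _ = (η₁ * η₃ / η₂) * dist (γ s) (γ t) + (η₁ * η₄ / η₂ + η₁) := by ring
end

section
/- Concatenation criterion for quasigeodesics at a separating wall: Let X be a geodesic metric space, T ⊂ X a subset such that every path from q to q' meets T whenever q, q' are on opposite sides of T. Let γ be a curve crossing T at a point q₁, with q before q₁ and q' after. Suppose (i) both halves of γ are (a₃,a₄)-quasigeodesic segments, (ii) there exist C₁ > 1, c₁ > 0 with length(γ_{[q,q₁]}) ≤ C₁·dist(q, T) + c₁ (the 'efficient escape' condition on the forward side). Then length(γ_{[q,q']}) ≤ (2C₁ + 2a₃C₁ + a₃)·d(q,q') + (2c₁ + 2a₃c₁ + a₄). -/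
/-- Concatenation criterion for quasigeodesics at a separating wall.  `γ` is a curve with
length function `L` (additive, bounding the distance, continuous), crossing the wall `T`
at the parameter `u₁` (`γ u₁ ∈ T`), with `q = γ u` before and `q' = γ u'` after.  Both
halves of `γ` are `(a₃,a₄)`-quasigeodesic segments, the forward half escapes efficiently:
`L u u₁ ≤ C₁ · dist(q,T) + c₁`, and since every path from `q` to a point on the far side
meets `T`, `dist(q,T) ≤ dist(q, γ v)` for `v ≥ u₁`.  Then
`L u u' ≤ (2C₁ + 2a₃C₁ + a₃) · dist(q,q') + (2c₁ + 2a₃c₁ + a₄)`. -/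
theorem stmt15 {X : Type*} [MetricSpace X] (T : Set X) (γ : ℝ → X) (L : ℝ → ℝ → ℝ)
    (u u₁ u' : ℝ) (hu : u ≤ u₁) (hu' : u₁ ≤ u')
    (a₃ a₄ C₁ c₁ : ℝ) (ha₃ : 1 ≤ a₃) (ha₄ : 0 ≤ a₄) (hC₁ : 1 < C₁) (hc₁ : 0 < c₁)
    (hLnonneg : ∀ s t, s ≤ t → 0 ≤ L s t)
    (hLadd : ∀ s t v, s ≤ t → t ≤ v → L s v = L s t + L t v)
    (hLdist : ∀ s t, s ≤ t → dist (γ s) (γ t) ≤ L s t)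
    (hLcont : ContinuousOn (L u₁) (Set.Icc u₁ u'))
    (hcross : γ u₁ ∈ T)
    (hqg₁ : ∀ s t, u ≤ s → s ≤ t → t ≤ u₁ → L s t ≤ a₃ * dist (γ s) (γ t) + a₄)
    (hqg₂ : ∀ s t, u₁ ≤ s → s ≤ t → t ≤ u' → L s t ≤ a₃ * dist (γ s) (γ t) + a₄)
    (hescape : L u u₁ ≤ C₁ * Metric.infDist (γ u) T + c₁)
    (hwall : ∀ v, u₁ ≤ v → v ≤ u' → Metric.infDist (γ u) T ≤ dist (γ u) (γ v)) :
    L u u' ≤ (2 * C₁ + 2 * a₃ * C₁ + a₃) * dist (γ u) (γ u')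
      + (2 * c₁ + 2 * a₃ * c₁ + a₄) := by
  have hL0 : L u₁ u₁ = 0 := by
    have := hLadd u₁ u₁ u₁ le_rfl le_rfl; linarith
  have hdistT : Metric.infDist (γ u) T ≤ dist (γ u) (γ u') := hwall u' hu' le_rfl
  have hA : L u u₁ ≤ C₁ * dist (γ u) (γ u') + c₁ := by
    nlinarith [Metric.infDist_nonneg (x := γ u) (s := T)]
  have hsplit : L u u' = L u u₁ + L u₁ u' := hLadd u u₁ u' hu hu'
  have hd0 : (0:ℝ) ≤ dist (γ u) (γ u') := dist_nonneg
  rcases le_total (L u₁ u') (L u u₁) with hcase | hcase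
  · nlinarith [mul_nonneg (show (0:ℝ) ≤ 2 * a₃ * C₁ + a₃ by nlinarith) hd0,
      mul_pos (show (0:ℝ) < 2 * a₃ by linarith) hc₁]
  · have hmem : L u u₁ ∈ Set.Icc (L u₁ u₁) (L u₁ u') := by
      refine ⟨?_, hcase⟩
      rw [hL0]; exact hLnonneg u u₁ hu
    obtain ⟨u'', ⟨h1, h2⟩, hu''⟩ := intermediate_value_Icc hu' hLcont hmem
    have hB : L u₁ u' = L u u₁ + L u'' u' := by
      have := hLadd u₁ u'' u' h1 h2; rw [hu''] at this; linarith
    have hqq'' : dist (γ u) (γ u'') ≤ 2 * L u u₁ := by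
      have h3 := hLdist u u'' (hu.trans h1)
      have h4 := hLadd u u₁ u'' hu h1
      rw [hu''] at h4; linarith
    have htri : dist (γ u'') (γ u') ≤ 2 * L u u₁ + dist (γ u) (γ u') := by
      linarith [dist_triangle_left (γ u'') (γ u') (γ u)]
    have hq2 := hqg₂ u'' u' h1 h2 le_rfl
    nlinarith [mul_le_mul_of_nonneg_left htri (by linarith : (0:ℝ) ≤ a₃),
      mul_le_mul_of_nonneg_left hA (by linarith : (0:ℝ) ≤ 2 + 2 * a₃)]
end
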